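/- The single-qubit shadow estimator applied to a weight-w Pauli observable is unbiased and has variance at most 3^w: if each qubit is measured in a uniformly random Pauli basis, the estimator ô = Π_{n∈supp(O)} 3·λ_n·1[W_n = P_n] (where λ_n = ±1 is the measurement outcome eigenvalue, and ô = 0 if incompatible) satisfies E[ô] = tr(Oρ) and E[ô²] ≤ 3^w. -/

import Mathlib

open Matrix
open scoped Classical ComplexOrder

noncomputable section

/-- The Pauli matrices X, Y, Z. -/
def PauliXYZ : Fin 3 → Matrix (Fin 2) (Fin 2) ℂ
  | 0 => !![0, 1; 1, 0]
  | 1 => !![0, -Complex.I; Complex.I, 0]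
  | 2 => !![1, 0; 0, -1]

/-- Eigenprojector `(I ± W)/2` of the Pauli matrix `W` (sign `+` for `b = true`). -/
def pauliProj (w : Fin 3) (b : Bool) : Matrix (Fin 2) (Fin 2) ℂ :=
  (2 : ℂ)⁻¹ • (1 + (if b then (1 : ℂ) else -1) • PauliXYZ w)

/-- A Pauli (`some w`) or the identity (`none`) on one qubit. -/
def pauliOfOpt : Option (Fin 3) → Matrix (Fin 2) (Fin 2) ℂ
  | none => 1
  | some w => PauliXYZ w

/-- Tensor-product projector onto outcome `lam` of the product Pauli-basis
measurement in bases `W`. -/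
def projN {N : ℕ} (W : Fin N → Fin 3) (lam : Fin N → Bool) :
    Matrix (Fin N → Fin 2) (Fin N → Fin 2) ℂ :=
  fun x y => ∏ n, pauliProj (W n) (lam n) (x n) (y n)

/-- The Pauli observable `O = P₁ ⊗ ⋯ ⊗ P_N` as a matrix. -/
def obsMat {N : ℕ} (O : Fin N → Option (Fin 3)) :
    Matrix (Fin N → Fin 2) (Fin N → Fin 2) ℂ :=
  fun x y => ∏ n, pauliOfOpt (O n) (x n) (y n)

/-- Weight of the Pauli observable: the number of qubits where it is not the identity. -/
def weight {N : ℕ} (O : Fin N → Option (Fin 3)) : ℕ :=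
  (Finset.univ.filter fun n => O n ≠ none).card

/-- The classical-shadow estimator for `O`: `3^w` times the product of outcome
signs over the support of `O` if the setting `W` is compatible with `O`, else `0`. -/
def shadowEst {N : ℕ} (O : Fin N → Option (Fin 3)) (W : Fin N → Fin 3)
    (lam : Fin N → Bool) : ℝ :=
  if ∀ n p, O n = some p → W n = p then
    3 ^ weight O *
      ∏ n ∈ Finset.univ.filter (fun n => O n ≠ none), (if lam n then (1 : ℝ) else -1)
  else 0

/-- Born probability of outcome `lam` when measuring `ρ` in the product basis `W`. -/
def born {N : ℕ} (ρ : Matrix (Fin N → Fin 2) (Fin N → Fin 2) ℂ)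
    (W : Fin N → Fin 3) (lam : Fin N → Bool) : ℝ :=
  ((ρ * projN W lam).trace).re

/-! Both moments are Born averages of functions that factor over the qubits, and such an average
is the pairing of `ρ` with the tensor product of the single-qubit averages
`⅓ ∑_{w,b} c(w,b) Π_{w,b}` over bases `w` and eigenprojectors `Π_{w,b}`. For the one-qubit factor of
the estimator this average inverts the measurement channel, returning `P` on the support and `I`
off it, so the first moment is `tr(Oρ)`; for its square it is `3 I` on the support and `I` off it,
so the second moment is exactly `3^w tr ρ = 3^w`. -/

def piKron {ι α β R : Type*} [Fintype ι] [CommMonoid R] (A : ι → Matrix α β R) :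
    Matrix (ι → α) (ι → β) R :=
  of fun x y => ∏ i, A i (x i) (y i)

section piKron

variable {ι α β R : Type*} [Fintype ι] [CommSemiring R]

lemma piKron_smul (c : ι → R) (A : ι → Matrix α β R) :
    piKron (fun i => c i • A i) = (∏ i, c i) • piKron A := by
  ext x y
  simp [piKron, Finset.prod_mul_distrib]

lemma piKron_sum [DecidableEq ι] {κ : ι → Type*} [∀ i, Fintype (κ i)]
    (A : ∀ i, κ i → Matrix α β R) :
    piKron (fun i => ∑ k, A i k) = ∑ f : ∀ i, κ i, piKron fun i => A i (f i) := by
  ext x y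
  simp [piKron, Matrix.sum_apply, Fintype.prod_sum]

lemma piKron_one [DecidableEq α] : piKron (fun _ : ι => (1 : Matrix α α R)) = 1 := by
  ext x y
  by_cases hxy : x = y
  · subst hxy
    simp [piKron, one_apply]
  · obtain ⟨i, hi⟩ := Function.ne_iff.mp hxy
    simp [piKron, one_apply, hxy, Finset.prod_eq_zero (Finset.mem_univ i), hi]

end piKron

lemma sum_pauliProj (w : Fin 3) : ∑ b, pauliProj w b = 1 := by
  simp only [Fintype.sum_bool, pauliProj, if_true, Bool.false_eq_true, if_false]
  module

lemma sum_sign_smul_pauliProj (w : Fin 3) :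
    ∑ b, (if b then (1 : ℂ) else -1) • pauliProj w b = PauliXYZ w := by
  simp only [Fintype.sum_bool, pauliProj, if_true, Bool.false_eq_true, if_false]
  module

lemma projN_eq_piKron {N : ℕ} (W : Fin N → Fin 3) (lam : Fin N → Bool) :
    projN W lam = piKron fun n => pauliProj (W n) (lam n) := rfl

lemma obsMat_eq_piKron {N : ℕ} (O : Fin N → Option (Fin 3)) :
    obsMat O = piKron fun n => pauliOfOpt (O n) := rfl

lemma average_born_mul_prod {N : ℕ} (ρ : Matrix (Fin N → Fin 2) (Fin N → Fin 2) ℂ)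
    (c : Fin N → Fin 3 → Bool → ℝ) :
    (3 : ℝ)⁻¹ ^ N * ∑ W : Fin N → Fin 3, ∑ lam : Fin N → Bool,
        born ρ W lam * ∏ n, c n (W n) (lam n)
      = (ρ * piKron fun n => (3 : ℂ)⁻¹ • ∑ w, ∑ b, (c n w b : ℂ) • pauliProj w b).trace.re := by
  have expand : (piKron fun n => (3 : ℂ)⁻¹ • ∑ w, ∑ b, (c n w b : ℂ) • pauliProj w b)
      = ∑ W : Fin N → Fin 3, ∑ lam : Fin N → Bool,
          (((3 : ℝ)⁻¹ ^ N * ∏ n, c n (W n) (lam n) : ℝ) : ℂ) • projN W lam := by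
    simp only [piKron_smul, piKron_sum, Finset.smul_sum, smul_smul, projN_eq_piKron,
      Finset.prod_mul_distrib, Finset.prod_const, Finset.card_univ, Fintype.card_fin]
    push_cast
    rfl
  have pair (r : ℝ) (W : Fin N → Fin 3) (lam : Fin N → Bool) :
      (ρ * ((r : ℂ) • projN W lam)).trace.re = r * born ρ W lam := by
    rw [Matrix.mul_smul, trace_smul, smul_eq_mul, Complex.re_ofReal_mul, born]
  simp only [expand, Finset.mul_sum, trace_sum, Complex.re_sum, pair]
  exact Finset.sum_congr rfl fun W _ => Finset.sum_congr rfl fun lam _ => by ring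

def shadowFactor : Option (Fin 3) → Fin 3 → Bool → ℝ
  | none => fun _ _ => 1
  | some p => fun w b => if w = p then 3 * (if b then 1 else -1) else 0

lemma shadowEst_eq_prod {N : ℕ} (O : Fin N → Option (Fin 3)) (W : Fin N → Fin 3)
    (lam : Fin N → Bool) :
    shadowEst O W lam = ∏ n, shadowFactor (O n) (W n) (lam n) := by
  rw [shadowEst, ← Finset.prod_filter_mul_prod_filter_not Finset.univ (fun n => O n ≠ none)]
  have off_support : ∏ n ∈ Finset.univ.filter (fun n => ¬O n ≠ none),
      shadowFactor (O n) (W n) (lam n) = 1 :=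
    Finset.prod_eq_one fun n hn => by
      rw [not_not.mp (Finset.mem_filter.mp hn).2]; rfl
  rw [off_support, mul_one]
  split_ifs with compatible
  · have on_support : ∀ n ∈ Finset.univ.filter (fun n => O n ≠ none),
        shadowFactor (O n) (W n) (lam n) = 3 * (if lam n then 1 else -1) := by
      intro n hn
      obtain ⟨p, hp⟩ := Option.ne_none_iff_exists'.mp (Finset.mem_filter.mp hn).2
      simp [hp, shadowFactor, compatible n p hp]
    rw [Finset.prod_congr rfl on_support, Finset.prod_mul_distrib, Finset.prod_const, weight]
  · push Not at compatible
    obtain ⟨n, p, hp, hw⟩ := compatible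
    refine (Finset.prod_eq_zero (i := n) (by simp [hp]) ?_).symm
    simp [hp, shadowFactor, hw]

lemma average_shadowFactor_smul_pauliProj (o : Option (Fin 3)) :
    (3 : ℂ)⁻¹ • ∑ w, ∑ b, (shadowFactor o w b : ℂ) • pauliProj w b = pauliOfOpt o := by
  cases o with
  | none =>
    simp only [shadowFactor, Complex.ofReal_one, one_smul, sum_pauliProj, Fin.sum_univ_three,
      pauliOfOpt]
    module
  | some p =>
    have inner (w : Fin 3) : ∑ b, (shadowFactor (some p) w b : ℂ) • pauliProj w b
        = if w = p then (3 : ℂ) • PauliXYZ p else 0 := by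
      split_ifs with hw
      · subst hw
        rw [← sum_sign_smul_pauliProj, Finset.smul_sum]
        refine Finset.sum_congr rfl fun b _ => ?_
        cases b <;> simp [shadowFactor]
      · simp [shadowFactor, hw]
    simp only [inner, Finset.sum_ite_eq', Finset.mem_univ, if_true, smul_smul, pauliOfOpt]
    norm_num

lemma average_shadowFactor_sq_smul_pauliProj (o : Option (Fin 3)) :
    (3 : ℂ)⁻¹ • ∑ w, ∑ b, ((shadowFactor o w b ^ 2 : ℝ) : ℂ) • pauliProj w b
      = (if o = none then 1 else 3 : ℂ) • 1 := by
  cases o with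
  | none =>
    simp only [shadowFactor, one_pow, Complex.ofReal_one, one_smul, sum_pauliProj,
      Fin.sum_univ_three, if_true]
    module
  | some p =>
    have inner (w : Fin 3) : ∑ b, ((shadowFactor (some p) w b ^ 2 : ℝ) : ℂ) • pauliProj w b
        = if w = p then (9 : ℂ) • 1 else 0 := by
      split_ifs with hw
      · subst hw
        rw [← sum_pauliProj w, Finset.smul_sum]
        refine Finset.sum_congr rfl fun b _ => ?_
        cases b <;> norm_num [shadowFactor]
      · simp [shadowFactor, hw]
    simp only [inner, Finset.sum_ite_eq', Finset.mem_univ, if_true, smul_smul, reduceCtorEq]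
    norm_num

lemma prod_ite_eq_none_eq_pow_weight {N : ℕ} (O : Fin N → Option (Fin 3)) :
    ∏ n, (if O n = none then (1 : ℂ) else 3) = 3 ^ weight O := by
  rw [Finset.prod_ite, Finset.prod_const_one, one_mul, Finset.prod_const]
  rfl

theorem shadow_estimator_unbiased_and_variance_general
    {N : ℕ} (ρ : Matrix (Fin N → Fin 2) (Fin N → Fin 2) ℂ)
    (hτ : ρ.trace = 1) (O : Fin N → Option (Fin 3)) :
    ((3 : ℝ)⁻¹ ^ N * ∑ W : Fin N → Fin 3, ∑ lam : Fin N → Bool,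
        born ρ W lam * shadowEst O W lam = ((obsMat O * ρ).trace).re)
    ∧ (3 : ℝ)⁻¹ ^ N * ∑ W : Fin N → Fin 3, ∑ lam : Fin N → Bool,
        born ρ W lam * (shadowEst O W lam) ^ 2 ≤ 3 ^ weight O := by
  constructor
  · simp only [shadowEst_eq_prod, average_born_mul_prod, average_shadowFactor_smul_pauliProj,
      ← obsMat_eq_piKron]
    rw [trace_mul_comm]
  · refine le_of_eq ?_
    simp only [shadowEst_eq_prod, ← Finset.prod_pow]
    rw [average_born_mul_prod ρ fun n w b => shadowFactor (O n) w b ^ 2]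
    simp only [average_shadowFactor_sq_smul_pauliProj, piKron_smul, piKron_one,
      prod_ite_eq_none_eq_pow_weight, Matrix.mul_smul, trace_smul, hτ,
      smul_eq_mul, mul_one]
    exact_mod_cast Complex.ofReal_re (3 ^ weight O)

/-- The single-shot random-Pauli-basis shadow estimator of a weight-`w` Pauli
observable is unbiased, `E[ô] = tr(Oρ)`, and its second moment is at most `3^w`. -/
theorem shadow_estimator_unbiased_and_variance
    {N : ℕ} (ρ : Matrix (Fin N → Fin 2) (Fin N → Fin 2) ℂ)
    (hρ : ρ.PosSemidef) (hτ : ρ.trace = 1) (O : Fin N → Option (Fin 3)) :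
    ((3 : ℝ)⁻¹ ^ N * ∑ W : Fin N → Fin 3, ∑ lam : Fin N → Bool,
        born ρ W lam * shadowEst O W lam = ((obsMat O * ρ).trace).re)
    ∧ (3 : ℝ)⁻¹ ^ N * ∑ W : Fin N → Fin 3, ∑ lam : Fin N → Bool,
        born ρ W lam * (shadowEst O W lam) ^ 2 ≤ 3 ^ weight O :=
  shadow_estimator_unbiased_and_variance_general ρ hτ O
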